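/- Let W = {z ∈ ℂ^d : Re(Σ_j z_j²) > 0}. Let α ∈ GL_d(ℂ) map ℝ^d into the closure of W, and let M = αᵀα. Then M has no eigenvalue that is a negative real number, and det α equals either the product of the principal square roots of the eigenvalues of M (counted with algebraic multiplicity), or its negative. -/
import Mathlib

open Matrix Polynomial Complex

private lemma sqrt_sq (μ : ℂ) : (μ ^ ((1 : ℂ) / 2)) ^ 2 = μ := by
  rcases eq_or_ne μ 0 with rfl | hμ
  · rw [Complex.zero_cpow (by norm_num)]; ring
  · rw [sq, ← Complex.cpow_add _ _ hμ]
    norm_num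

theorem sign_lemma_complex (d : ℕ) (α : Matrix (Fin d) (Fin d) ℂ)
    (hα : IsUnit α.det)
    (h : ∀ x : Fin d → ℝ, α.mulVec (fun j => (x j : ℂ)) ∈
        closure {z : Fin d → ℂ | 0 < (∑ j, z j ^ 2).re}) :
    (∀ μ ∈ (α.transpose * α).charpoly.roots, ¬ (μ.im = 0 ∧ μ.re < 0)) ∧
    (α.det = ((α.transpose * α).charpoly.roots.map
        (fun μ => μ ^ ((1 : ℂ) / 2))).prod ∨
     α.det = -((α.transpose * α).charpoly.roots.map
        (fun μ => μ ^ ((1 : ℂ) / 2))).prod) := by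
  set M := α.transpose * α with hM
  have hMsymm : ∀ i j, M i j = M j i := by
    intro i j
    simp [hM, Matrix.mul_apply, Matrix.transpose_apply, mul_comm]
  -- nonnegativity of the quadratic form on real vectors
  have hQ : ∀ x : Fin d → ℝ,
      0 ≤ ((fun j => ((x j : ℂ))) ⬝ᵥ M.mulVec (fun j => ((x j : ℂ)))).re := by
    intro x
    have hcl : closure {z : Fin d → ℂ | 0 < (∑ j, z j ^ 2).re}
        ⊆ {z : Fin d → ℂ | 0 ≤ (∑ j, z j ^ 2).re} := by
      apply closure_minimal
      · intro z hz
        simp only [Set.mem_setOf_eq] at hz ⊢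
        exact hz.le
      · have hf : Continuous fun z : Fin d → ℂ => (∑ j, z j ^ 2).re := by fun_prop
        exact isClosed_le continuous_const hf
    have h2 := hcl (h x)
    have h3 : (∑ j, (α.mulVec (fun j => ((x j : ℂ))) j) ^ 2)
        = (fun j => ((x j : ℂ))) ⬝ᵥ M.mulVec (fun j => ((x j : ℂ))) := by
      rw [hM, ← Matrix.mulVec_mulVec, Matrix.dotProduct_mulVec,
        Matrix.vecMul_transpose]
      simp [dotProduct, sq]
    rw [← h3]
    exact h2
  constructor
  · rintro μ hroot ⟨him, hre⟩
    -- get an eigenvector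
    have hdet : (μ • (1 : Matrix (Fin d) (Fin d) ℂ) - M).det = 0 := by
      have h0 : M.charpoly.eval μ = 0 := by
        have : M.charpoly.IsRoot μ := Polynomial.isRoot_of_mem_roots hroot
        exact this
      have h1 : M.charpoly.eval μ =
          (μ • (1 : Matrix (Fin d) (Fin d) ℂ) - M).det := by
        rw [Matrix.charpoly, ← Polynomial.coe_evalRingHom, RingHom.map_det]
        congr 1
        ext i j
        by_cases hij : i = j
        · subst hij
          simp [Matrix.charmatrix_apply_eq, Matrix.one_apply, Matrix.smul_apply]
        · simp [Matrix.charmatrix_apply_ne _ _ _ hij, Matrix.one_apply_ne hij,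
            Matrix.smul_apply]
      rw [← h1, h0]
    obtain ⟨v, hv0, hveq⟩ := Matrix.exists_mulVec_eq_zero_iff.mpr hdet
    have heig : M.mulVec v = μ • v := by
      have := hveq
      rw [Matrix.sub_mulVec, sub_eq_zero] at this
      rw [← this, Matrix.smul_mulVec, Matrix.one_mulVec]
    -- key computation
    set a : Fin d → ℂ := fun j => ((v j).re : ℂ) with ha
    set b : Fin d → ℂ := fun j => ((v j).im : ℂ) with hb
    have swap : ∑ i, ∑ j, M i j * (a i * b j) = ∑ i, ∑ j, M i j * (a j * b i) := by
      rw [Finset.sum_comm]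
      refine Finset.sum_congr rfl fun i _ => Finset.sum_congr rfl fun j _ => ?_
      rw [hMsymm j i]
    have key : star v ⬝ᵥ M.mulVec v = a ⬝ᵥ M.mulVec a + b ⬝ᵥ M.mulVec b := by
      have expand : ∀ i j, (starRingEnd ℂ) (v i) * (M i j * v j)
          = a i * (M i j * a j) + b i * (M i j * b j)
            + Complex.I * (M i j * (a i * b j)) - Complex.I * (M i j * (a j * b i)) := by
        intro i j
        have hvi : v i = a i + b i * Complex.I := (Complex.re_add_im (v i)).symm
        have hvj : v j = a j + b j * Complex.I := (Complex.re_add_im (v j)).symm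
        have hci : (starRingEnd ℂ) (v i) = a i - b i * Complex.I := by
          simp only [ha, hb]
          apply Complex.ext <;> simp
        rw [hci, hvj]
        have hI : Complex.I ^ 2 = -1 := Complex.I_sq
        ring_nf
        rw [hI]
        ring
      calc star v ⬝ᵥ M.mulVec v
          = ∑ i, ∑ j, (starRingEnd ℂ) (v i) * (M i j * v j) := by
            simp [dotProduct, Matrix.mulVec, Finset.mul_sum]
        _ = ∑ i, ∑ j, (a i * (M i j * a j) + b i * (M i j * b j)
            + Complex.I * (M i j * (a i * b j)) - Complex.I * (M i j * (a j * b i))) := by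
            exact Finset.sum_congr rfl fun i _ => Finset.sum_congr rfl fun j _ => expand i j
        _ = (∑ i, ∑ j, a i * (M i j * a j)) + (∑ i, ∑ j, b i * (M i j * b j))
            + Complex.I * (∑ i, ∑ j, M i j * (a i * b j))
            - Complex.I * (∑ i, ∑ j, M i j * (a j * b i)) := by
            simp [Finset.sum_add_distrib, Finset.sum_sub_distrib, Finset.mul_sum]
        _ = a ⬝ᵥ M.mulVec a + b ⬝ᵥ M.mulVec b := by
            rw [swap]
            simp [dotProduct, Matrix.mulVec, Finset.mul_sum]
    -- left side via eigenvalue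
    have hS : star v ⬝ᵥ v = ((∑ i, Complex.normSq (v i) : ℝ) : ℂ) := by
      simp only [dotProduct, Pi.star_apply, RCLike.star_def]
      push_cast
      exact Finset.sum_congr rfl fun i _ => by
        rw [mul_comm, Complex.mul_conj]
    have hleft : star v ⬝ᵥ M.mulVec v = μ * ((∑ i, Complex.normSq (v i) : ℝ) : ℂ) := by
      rw [heig, dotProduct_smul, smul_eq_mul, hS]
    have hSpos : 0 < ∑ i, Complex.normSq (v i) := by
      have : ∃ i, v i ≠ 0 := by
        by_contra hc
        push_neg at hc
        exact hv0 (funext hc)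
      obtain ⟨i, hi⟩ := this
      have := Complex.normSq_pos.mpr hi
      exact Finset.sum_pos' (fun j _ => Complex.normSq_nonneg _) ⟨i, Finset.mem_univ i, this⟩
    have hre1 : (star v ⬝ᵥ M.mulVec v).re = μ.re * ∑ i, Complex.normSq (v i) := by
      rw [hleft]
      simp [Complex.mul_re, him]
    have hre2 : 0 ≤ (star v ⬝ᵥ M.mulVec v).re := by
      rw [key]
      have h1 := hQ (fun j => (v j).re)
      have h2 := hQ (fun j => (v j).im)
      simp only [Complex.add_re]
      exact add_nonneg h1 h2
    rw [hre1] at hre2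
    nlinarith
  · -- algebraic part
    have hsq : (((M.charpoly.roots.map (fun μ => μ ^ ((1 : ℂ) / 2))).prod)) ^ 2
        = M.charpoly.roots.prod := by
      rw [← Multiset.prod_map_pow]
      have heq : (M.charpoly.roots.map fun i => (i ^ ((1:ℂ)/2)) ^ 2)
          = M.charpoly.roots.map id := Multiset.map_congr rfl fun μ _ => sqrt_sq μ
      rw [heq, Multiset.map_id]
    have hdetM : M.det = M.charpoly.roots.prod := Matrix.det_eq_prod_roots_charpoly M
    have hdet2 : α.det ^ 2 = (((M.charpoly.roots.map (fun μ => μ ^ ((1 : ℂ) / 2))).prod)) ^ 2 := by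
      rw [hsq, ← hdetM, hM, Matrix.det_mul, Matrix.det_transpose, sq]
    have := sq_eq_sq_iff_eq_or_eq_neg.mp hdet2
    exact this
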